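/- arXiv:math/0506485 — 8 statements merged into one kernel-verified Lean document; each statement's English description precedes it below -/
import Mathlib

section
/- Any matrix P in GL(r,ℤ) which is congruent to the identity matrix modulo 2 may be obtained from the identity matrix by a finite sequence of row operations, each of which is either multiplying a row by -1 or adding an even integer multiple of one row to another row. -/
open Matrix Finset

def genSet (r : ℕ) : Set (Matrix (Fin r) (Fin r) ℤ) :=
  {M | ∃ i : Fin r, M = 1 - 2 • Matrix.single i i (1 : ℤ)} ∪
  {M | ∃ (i j : Fin r) (c : ℤ), i ≠ j ∧ M = Matrix.transvection i j (2 * c)}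

abbrev cl (r : ℕ) : Submonoid (Matrix (Fin r) (Fin r) ℤ) := Submonoid.closure (genSet r)

lemma stdApply {r : ℕ} (i j a b : Fin r) (c : ℤ) :
    Matrix.single i j c a b = if i = a ∧ j = b then c else 0 := rfl

lemma negRow_mem (r : ℕ) (i : Fin r) :
    (1 - 2 • Matrix.single i i (1 : ℤ)) ∈ cl r :=
  Submonoid.subset_closure (Or.inl ⟨i, rfl⟩)

lemma transvection_mem (r : ℕ) {i j : Fin r} (h : i ≠ j) (c : ℤ) :
    Matrix.transvection i j (2 * c) ∈ cl r :=
  Submonoid.subset_closure (Or.inr ⟨i, j, c, h, rfl⟩)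

lemma negRow_eq (r : ℕ) (i : Fin r) :
    1 - 2 • Matrix.single i i (1 : ℤ) = 1 + Matrix.single i i (-2 : ℤ) := by
  rw [Matrix.smul_single]
  norm_num
  rw [show Matrix.single i i (-2:ℤ) = -Matrix.single i i 2 by
    rw [← neg_one_smul ℤ (Matrix.single i i (2:ℤ)), Matrix.smul_single]; norm_num]
  rw [sub_eq_add_neg]

lemma negRow_mul_negRow (r : ℕ) (i : Fin r) :
    (1 - 2 • Matrix.single i i (1 : ℤ)) * (1 - 2 • Matrix.single i i (1 : ℤ)) = 1 := by
  rw [negRow_eq]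
  have h : Matrix.single i i (-2:ℤ) * Matrix.single i i (-2:ℤ)
      = Matrix.single i i (4:ℤ) := by
    rw [Matrix.single_mul_single_same]; norm_num
  norm_num [mul_add, add_mul, h, ← Matrix.single_add, add_assoc]

lemma negRow_mul_apply {r : ℕ} (i : Fin r) (M : Matrix (Fin r) (Fin r) ℤ) (a b : Fin r) :
    (((1 - 2 • Matrix.single i i (1 : ℤ)) * M : Matrix (Fin r) (Fin r) ℤ)) a b
      = if a = i then -M i b else M a b := by
  rw [negRow_eq, Matrix.add_mul, one_mul, Matrix.add_apply]
  rcases eq_or_ne a i with rfl | h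
  · rw [Matrix.single_mul_apply_same]
    simp; ring
  · rw [Matrix.single_mul_apply_of_ne (h := h)]
    simp [h]

lemma cancel {r : ℕ} {g' g P : Matrix (Fin r) (Fin r) ℤ}
    (h1 : g' ∈ cl r) (h2 : g' * g = 1) (h3 : g * P ∈ cl r) : P ∈ cl r := by
  have := Submonoid.mul_mem _ h1 h3
  rwa [← mul_assoc, h2, one_mul] at this

lemma euclid_step (a b : ℤ) (hb : b ≠ 0) (hpar : Odd (a + b)) :
    ∃ c : ℤ, |a + 2 * c * b| < |b| := by
  set m : ℤ := 2 * |b| with hm_def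
  have hbpos : 0 < |b| := abs_pos.mpr hb
  have hm : 0 < m := by positivity
  set q : ℤ := a / m with hq
  set r : ℤ := a % m with hr
  have hr0 : 0 ≤ r := Int.emod_nonneg a (ne_of_gt hm)
  have hrm : r < m := Int.emod_lt_of_pos a hm
  have hdiv : m * q + r = a := Int.mul_ediv_add_emod a m
  have key : ∀ k : ℤ, ∃ c : ℤ, 2 * c * b = k * m := by
    intro k
    rcases abs_choice b with h | h
    · exact ⟨k, by rw [hm_def, h]; ring⟩
    · exact ⟨-k, by rw [hm_def, h]; ring⟩
  have hpar2 : r ≠ |b| := by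
    have he : Even (a - r) := ⟨|b| * q, by rw [← hdiv, hm_def]; ring⟩
    have h2 : (a + b) % 2 = 1 := Int.odd_iff.mp hpar
    have h3 : (a - r) % 2 = 0 := Int.even_iff.mp he
    intro heq
    rcases abs_choice b with h | h <;> rw [h] at heq <;> omega
  rcases lt_or_ge r |b| with hlt | hge
  · obtain ⟨c, hc⟩ := key (-q)
    refine ⟨c, ?_⟩
    have hv : a + 2 * c * b = r := by rw [hc, ← hdiv]; ring
    rw [hv, abs_of_nonneg hr0]; exact hlt
  · have hgt : |b| < r := lt_of_le_of_ne hge (fun h => hpar2 h.symm)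
    obtain ⟨c, hc⟩ := key (-q - 1)
    refine ⟨c, ?_⟩
    have hv : a + 2 * c * b = r - m := by rw [hc, ← hdiv]; ring
    rw [hv, abs_of_nonpos (by omega)]
    omega

def liftZ {n : ℕ} (B : Matrix (Fin n) (Fin n) ℤ) : Matrix (Fin (n+1)) (Fin (n+1)) ℤ :=
  Matrix.of fun i j =>
    Fin.cases (Fin.cases 1 (fun _ => 0) j) (fun i' => Fin.cases 0 (fun j' => B i' j') j) i

@[simp] lemma liftZ_zero_zero {n : ℕ} (B : Matrix (Fin n) (Fin n) ℤ) : liftZ B 0 0 = 1 := rfl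
@[simp] lemma liftZ_zero_succ {n : ℕ} (B : Matrix (Fin n) (Fin n) ℤ) (j : Fin n) :
    liftZ B 0 j.succ = 0 := by simp [liftZ]
@[simp] lemma liftZ_succ_zero {n : ℕ} (B : Matrix (Fin n) (Fin n) ℤ) (i : Fin n) :
    liftZ B i.succ 0 = 0 := by simp [liftZ]
@[simp] lemma liftZ_succ_succ {n : ℕ} (B : Matrix (Fin n) (Fin n) ℤ) (i j : Fin n) :
    liftZ B i.succ j.succ = B i j := by simp [liftZ]

lemma liftZ_one {n : ℕ} : liftZ (1 : Matrix (Fin n) (Fin n) ℤ) = 1 := by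
  ext i j
  induction i using Fin.cases <;> induction j using Fin.cases <;>
    simp [Matrix.one_apply, Fin.succ_ne_zero, Fin.succ_inj, Ne.symm (Fin.succ_ne_zero _)]

lemma liftZ_mul {n : ℕ} (A B : Matrix (Fin n) (Fin n) ℤ) :
    liftZ (A * B) = liftZ A * liftZ B := by
  ext i j
  induction i using Fin.cases <;> induction j using Fin.cases <;>
    simp [Matrix.mul_apply, Fin.sum_univ_succ]

lemma liftZ_negRow {n : ℕ} (i : Fin n) :
    liftZ (1 - 2 • Matrix.single i i (1 : ℤ))
      = 1 - 2 • Matrix.single i.succ i.succ (1 : ℤ) := by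
  ext a b
  induction a using Fin.cases <;> induction b using Fin.cases <;>
    simp [Matrix.one_apply, stdApply, Fin.succ_ne_zero, Fin.succ_inj,
      Ne.symm (Fin.succ_ne_zero _), Matrix.sub_apply]

lemma liftZ_transvection {n : ℕ} (i j : Fin n) (c : ℤ) :
    liftZ (Matrix.transvection i j c) = Matrix.transvection i.succ j.succ c := by
  ext a b
  induction a using Fin.cases <;> induction b using Fin.cases <;>
    simp [Matrix.transvection, Matrix.one_apply, stdApply, Fin.succ_ne_zero,
      Fin.succ_inj, Ne.symm (Fin.succ_ne_zero _), Matrix.add_apply]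

lemma liftZ_mem {n : ℕ} {B : Matrix (Fin n) (Fin n) ℤ} (hB : B ∈ cl n) :
    liftZ B ∈ cl (n+1) := by
  induction hB using Submonoid.closure_induction with
  | one => rw [liftZ_one]; exact Submonoid.one_mem _
  | mul x y _ _ hx hy => rw [liftZ_mul]; exact Submonoid.mul_mem _ hx hy
  | mem x hx =>
    rcases hx with ⟨i, rfl⟩ | ⟨i, j, c, hij, rfl⟩
    · rw [liftZ_negRow]; exact Submonoid.subset_closure (Or.inl ⟨i.succ, rfl⟩)
    · rw [liftZ_transvection]
      exact Submonoid.subset_closure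
        (Or.inr ⟨i.succ, j.succ, c, by simpa [Fin.succ_inj] using hij, rfl⟩)

lemma rowSum_mem {n : ℕ} (v : Fin n → ℤ) (hv : ∀ j, Even (v j)) (s : Finset (Fin n)) :
    (1 + ∑ j ∈ s, Matrix.single (0 : Fin (n+1)) j.succ (v j)) ∈ cl (n+1) := by
  induction s using Finset.induction with
  | empty => simpa using Submonoid.one_mem _
  | @insert a s ha ih =>
    rw [Finset.sum_insert ha]
    have hz : Matrix.single (0 : Fin (n+1)) a.succ (v a) *
        (∑ j ∈ s, Matrix.single (0 : Fin (n+1)) j.succ (v j)) = 0 := by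
      rw [Finset.mul_sum]
      refine Finset.sum_eq_zero fun j _ => ?_
      exact Matrix.single_mul_single_of_ne (h := Fin.succ_ne_zero a) ..
    have key : (1 + Matrix.single (0 : Fin (n+1)) a.succ (v a)) *
        (1 + ∑ j ∈ s, Matrix.single (0 : Fin (n+1)) j.succ (v j))
        = 1 + (Matrix.single (0 : Fin (n+1)) a.succ (v a)
            + ∑ j ∈ s, Matrix.single (0 : Fin (n+1)) j.succ (v j)) := by
      rw [mul_add, add_mul, add_mul, hz, one_mul, one_mul, mul_one, add_zero, add_assoc]
    rw [← key]
    refine Submonoid.mul_mem _ ?_ ih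
    obtain ⟨c, hc⟩ := hv a
    have heq : (1 + Matrix.single (0 : Fin (n+1)) a.succ (v a))
        = Matrix.transvection (0 : Fin (n+1)) a.succ (2 * c) := by
      rw [Matrix.transvection, hc]
      norm_num [two_mul]
    rw [heq]
    exact transvection_mem _ (Ne.symm (Fin.succ_ne_zero a)) c

lemma decomp {n : ℕ} (P : Matrix (Fin (n+1)) (Fin (n+1)) ℤ) (h00 : P 0 0 = 1)
    (hcol : ∀ i : Fin n, P i.succ 0 = 0) :
    P = liftZ (P.submatrix Fin.succ Fin.succ) *
        (1 + ∑ j : Fin n, Matrix.single (0 : Fin (n+1)) j.succ (P 0 j.succ)) := by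
  ext i k
  rw [Matrix.mul_apply, Fin.sum_univ_succ]
  induction i using Fin.cases <;> induction k using Fin.cases <;>
    simp [Matrix.add_apply, Matrix.one_apply, stdApply, Matrix.sum_apply,
      Fin.succ_ne_zero, Ne.symm (Fin.succ_ne_zero _), Fin.succ_inj, h00, hcol,
      Finset.sum_ite_eq, Finset.sum_ite_eq', Matrix.mul_apply, Fin.sum_univ_succ]

lemma det_of_col {n : ℕ} (P : Matrix (Fin (n+1)) (Fin (n+1)) ℤ)
    (hcol : ∀ i : Fin n, P i.succ 0 = 0) :
    P.det = P 0 0 * (P.submatrix Fin.succ Fin.succ).det := by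
  rw [Matrix.det_succ_column_zero, Fin.sum_univ_succ]
  simp [hcol]

lemma odd_trans {r : ℕ} {i j : Fin r} (hij : i ≠ j) (c : ℤ)
    (P : Matrix (Fin r) (Fin r) ℤ)
    (hodd : ∀ a, Odd (P a a)) (heven : ∀ a b, a ≠ b → Even (P a b)) :
    ∀ a, Odd ((Matrix.transvection i j (2*c) * P) a a) := by
  intro a
  rcases eq_or_ne a i with rfl | h
  · rw [Matrix.transvection_mul_apply_same]
    exact (hodd a).add_even ⟨c * P j a, by ring⟩
  · rw [Matrix.transvection_mul_apply_of_ne (ha := h)]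
    exact hodd a

lemma even_trans {r : ℕ} {i j : Fin r} (hij : i ≠ j) (c : ℤ)
    (P : Matrix (Fin r) (Fin r) ℤ)
    (heven : ∀ a b, a ≠ b → Even (P a b)) :
    ∀ a b, a ≠ b → Even ((Matrix.transvection i j (2*c) * P) a b) := by
  intro a b hab
  rcases eq_or_ne a i with rfl | h
  · rw [Matrix.transvection_mul_apply_same]
    exact (heven a b hab).add ⟨c * P j b, by ring⟩
  · rw [Matrix.transvection_mul_apply_of_ne (ha := h)]
    exact heven a b hab

lemma det_trans {r : ℕ} {i j : Fin r} (hij : i ≠ j) (c : ℤ)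
    (P : Matrix (Fin r) (Fin r) ℤ) (hP : IsUnit P.det) :
    IsUnit ((Matrix.transvection i j c * P)).det := by
  rw [Matrix.det_mul, Matrix.det_transvection_of_ne _ _ hij, one_mul]
  exact hP

lemma trans_cancel {r : ℕ} {i j : Fin r} (hij : i ≠ j) (c : ℤ)
    {P : Matrix (Fin r) (Fin r) ℤ}
    (h : Matrix.transvection i j (2*c) * P ∈ cl r) : P ∈ cl r := by
  refine cancel (transvection_mem r hij (-c)) ?_ h
  rw [Matrix.transvection_mul_transvection_same _ _ hij]
  norm_num

lemma finalize1 {n : ℕ}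
    (IH : ∀ B : Matrix (Fin n) (Fin n) ℤ, IsUnit B.det → (∀ i, Odd (B i i)) →
      (∀ i j, i ≠ j → Even (B i j)) → B ∈ cl n)
    (P : Matrix (Fin (n+1)) (Fin (n+1)) ℤ) (hP : IsUnit P.det)
    (hodd : ∀ i, Odd (P i i)) (heven : ∀ i j, i ≠ j → Even (P i j))
    (hcol : ∀ i : Fin n, P i.succ 0 = 0) (h00 : P 0 0 = 1) : P ∈ cl (n+1) := by
  have hdet : P.det = P 0 0 * (P.submatrix Fin.succ Fin.succ).det := det_of_col P hcol
  have hub : IsUnit (P.submatrix Fin.succ Fin.succ).det := by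
    rw [hdet, h00, one_mul] at hP; exact hP
  have hB : (P.submatrix Fin.succ Fin.succ) ∈ cl n := by
    refine IH _ hub (fun i => hodd i.succ) (fun i j hij => ?_)
    exact heven i.succ j.succ (fun h => hij (Fin.succ_injective _ h))
  rw [decomp P h00 hcol]
  exact Submonoid.mul_mem _ (liftZ_mem hB)
    (rowSum_mem (fun j => P 0 j.succ)
      (fun j => heven 0 j.succ (Ne.symm (Fin.succ_ne_zero j))) Finset.univ)

lemma finalize {n : ℕ}
    (IH : ∀ B : Matrix (Fin n) (Fin n) ℤ, IsUnit B.det → (∀ i, Odd (B i i)) →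
      (∀ i j, i ≠ j → Even (B i j)) → B ∈ cl n)
    (P : Matrix (Fin (n+1)) (Fin (n+1)) ℤ) (hP : IsUnit P.det)
    (hodd : ∀ i, Odd (P i i)) (heven : ∀ i j, i ≠ j → Even (P i j))
    (hcol : ∀ i : Fin n, P i.succ 0 = 0) : P ∈ cl (n+1) := by
  have hdet : P.det = P 0 0 * (P.submatrix Fin.succ Fin.succ).det := det_of_col P hcol
  have hu0 : IsUnit (P 0 0) := isUnit_of_mul_isUnit_left (hdet ▸ hP)
  rcases Int.isUnit_iff.mp hu0 with h1 | hm1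
  · exact finalize1 IH P hP hodd heven hcol h1
  · -- negate row 0 first
    set D : Matrix (Fin (n+1)) (Fin (n+1)) ℤ := 1 - 2 • Matrix.single 0 0 (1 : ℤ) with hD
    refine cancel (negRow_mem (n+1) 0) (negRow_mul_negRow (n+1) 0) ?_
    set P' : Matrix (Fin (n+1)) (Fin (n+1)) ℤ := D * P with hP'
    have hent : ∀ a b, P' a b = if a = 0 then -P 0 b else P a b := fun a b =>
      negRow_mul_apply 0 P a b
    have hDu : IsUnit D.det := by
      refine IsUnit.of_mul_eq_one D.det ?_
      rw [← Matrix.det_mul, negRow_mul_negRow, Matrix.det_one]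
    refine finalize1 IH P' (by rw [hP', Matrix.det_mul]; exact hDu.mul hP) ?_ ?_ ?_ ?_
    · intro i
      rw [hent]
      rcases eq_or_ne i 0 with rfl | h
      · simpa using (hodd 0).neg
      · simpa [h] using hodd i
    · intro i j hij
      rw [hent]
      rcases eq_or_ne i 0 with rfl | h
      · simpa using (heven 0 j hij).neg
      · simpa [h] using heven i j hij
    · intro i
      rw [hent]
      simp [Fin.succ_ne_zero, hcol]
    · rw [hent]
      simp [hm1]

lemma mainLoop {n : ℕ}
    (IH : ∀ B : Matrix (Fin n) (Fin n) ℤ, IsUnit B.det → (∀ i, Odd (B i i)) →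
      (∀ i j, i ≠ j → Even (B i j)) → B ∈ cl n) :
    ∀ (N : ℕ) (P : Matrix (Fin (n+1)) (Fin (n+1)) ℤ), IsUnit P.det →
      (∀ i, Odd (P i i)) → (∀ i j, i ≠ j → Even (P i j)) →
      (∑ i : Fin n, (P i.succ 0).natAbs) ≤ N → P ∈ cl (n+1) := by
  intro N
  induction N with
  | zero =>
    intro P hP hodd heven hsum
    refine finalize IH P hP hodd heven fun i => ?_
    have h0 : (P i.succ 0).natAbs = 0 := by
      have := Finset.sum_eq_zero_iff.mp (Nat.le_zero.mp hsum) i (Finset.mem_univ i)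
      exact this
    exact Int.natAbs_eq_zero.mp h0
  | succ N ihN =>
    intro P hP hodd heven hsum
    by_cases hc : ∀ i : Fin n, P i.succ 0 = 0
    · exact finalize IH P hP hodd heven hc
    · push_neg at hc
      obtain ⟨i, hi⟩ := hc
      have hne1 : (0 : Fin (n+1)) ≠ i.succ := Ne.symm (Fin.succ_ne_zero i)
      have hpar1 : Odd (P 0 0 + P i.succ 0) :=
        (hodd 0).add_even (heven i.succ 0 (Fin.succ_ne_zero i))
      obtain ⟨c1, hc1⟩ := euclid_step (P 0 0) (P i.succ 0) hi hpar1
      set Q := Matrix.transvection 0 i.succ (2*c1) * P with hQdef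
      have hQ00 : Q 0 0 = P 0 0 + 2*c1*P i.succ 0 := by
        rw [hQdef, Matrix.transvection_mul_apply_same]
      have hQrow : ∀ a, a ≠ 0 → ∀ b, Q a b = P a b := fun a ha b => by
        rw [hQdef, Matrix.transvection_mul_apply_of_ne (ha := ha)]
      have oddQ : ∀ a, Odd (Q a a) := odd_trans hne1 c1 P hodd heven
      have evenQ : ∀ a b, a ≠ b → Even (Q a b) := even_trans hne1 c1 P heven
      have detQ : IsUnit Q.det := det_trans hne1 (2*c1) P hP
      have hQ00ne : Q 0 0 ≠ 0 := by
        have := Int.odd_iff.mp (oddQ 0); omega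
      have hQi0 : Q i.succ 0 = P i.succ 0 := hQrow i.succ (Fin.succ_ne_zero i) 0
      have hpar2 : Odd (Q i.succ 0 + Q 0 0) :=
        (evenQ i.succ 0 (Fin.succ_ne_zero i)).add_odd (oddQ 0)
      obtain ⟨c2, hc2⟩ := euclid_step (Q i.succ 0) (Q 0 0) hQ00ne hpar2
      set R := Matrix.transvection i.succ 0 (2*c2) * Q with hRdef
      have hRi0 : R i.succ 0 = Q i.succ 0 + 2*c2*Q 0 0 := by
        rw [hRdef, Matrix.transvection_mul_apply_same]
      have hRrow : ∀ a, a ≠ i.succ → ∀ b, R a b = Q a b := fun a ha b => by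
        rw [hRdef, Matrix.transvection_mul_apply_of_ne (ha := ha)]
      have oddR : ∀ a, Odd (R a a) := odd_trans (Fin.succ_ne_zero i) c2 Q oddQ evenQ
      have evenR : ∀ a b, a ≠ b → Even (R a b) := even_trans (Fin.succ_ne_zero i) c2 Q evenQ
      have detR : IsUnit R.det := det_trans (Fin.succ_ne_zero i) (2*c2) Q detQ
      have hlt : (R i.succ 0).natAbs < (P i.succ 0).natAbs := by
        have h1 : |R i.succ 0| < |Q 0 0| := by rw [hRi0]; exact hc2
        have h2 : |Q 0 0| < |P i.succ 0| := by rw [hQ00]; exact hc1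
        have h3 := lt_trans h1 h2
        rwa [Int.abs_eq_natAbs, Int.abs_eq_natAbs, Nat.cast_lt] at h3
      have hsum' : ∑ j : Fin n, (R j.succ 0).natAbs ≤ N := by
        have hsplitR : ∑ j : Fin n, (R j.succ 0).natAbs
            = (∑ j ∈ Finset.univ.erase i, (R j.succ 0).natAbs) + (R i.succ 0).natAbs :=
          (Finset.sum_erase_add _ _ (Finset.mem_univ i)).symm
        have hsplitP : ∑ j : Fin n, (P j.succ 0).natAbs
            = (∑ j ∈ Finset.univ.erase i, (P j.succ 0).natAbs) + (P i.succ 0).natAbs :=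
          (Finset.sum_erase_add _ _ (Finset.mem_univ i)).symm
        have heq : ∑ j ∈ Finset.univ.erase i, (R j.succ 0).natAbs
            = ∑ j ∈ Finset.univ.erase i, (P j.succ 0).natAbs := by
          refine Finset.sum_congr rfl fun j hj => ?_
          have hji : j ≠ i := (Finset.mem_erase.mp hj).1
          rw [hRrow j.succ (fun h => hji (Fin.succ_injective _ h)) 0,
            hQrow j.succ (Fin.succ_ne_zero j) 0]
        omega
      have hRmem : R ∈ cl (n+1) := ihN R detR oddR evenR hsum'
      rw [hRdef] at hRmem
      have hQmem : Q ∈ cl (n+1) := trans_cancel (Fin.succ_ne_zero i) c2 hRmem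
      rw [hQdef] at hQmem
      exact trans_cancel hne1 c1 hQmem

lemma mainAux : ∀ (r : ℕ) (P : Matrix (Fin r) (Fin r) ℤ), IsUnit P.det →
    (∀ i, Odd (P i i)) → (∀ i j, i ≠ j → Even (P i j)) → P ∈ cl r := by
  intro r
  induction r with
  | zero =>
    intro P _ _ _
    have hP1 : P = 1 := by ext i j; exact i.elim0
    rw [hP1]; exact Submonoid.one_mem _
  | succ n IHn =>
    intro P h1 h2 h3
    exact mainLoop IHn _ P h1 h2 h3 le_rfl



/-- Any matrix `P ∈ GL(r,ℤ)` congruent to the identity modulo 2 is a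
finite product of elementary matrices, each either negating a row or adding an even
multiple of one row to another. -/
theorem stmt0 (r : ℕ) (P : Matrix (Fin r) (Fin r) ℤ)
    (hP : IsUnit P.det)
    (hodd : ∀ i, Odd (P i i))
    (heven : ∀ i j, i ≠ j → Even (P i j)) :
    P ∈ Submonoid.closure
      ({M | ∃ i : Fin r, M = 1 - 2 • Matrix.single i i (1 : ℤ)} ∪
       {M | ∃ (i j : Fin r) (c : ℤ), i ≠ j ∧ M = Matrix.transvection i j (2 * c)}) := by
  exact mainAux r P hP hodd heven
end

section
/- Let b = (b₁,...,b_r) be a vector of nonnegative integers with gcd(b₁,...,b_r) = 1, such that b₁ is odd and b₂,...,b_r are all even. Then b can be transformed to the standard basis vector (1,0,...,0) by a finite sequence of operations, each of which either negates one component or adds an even integer multiple of one component to another component. -/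
private lemma exists_reduce (a c : ℤ) (ha : a ≠ 0) :
    ∃ k : ℤ, |c + 2 * k * a| ≤ |a| := by
  have ha' : 0 < |a| := abs_pos.mpr ha
  have hm : (0:ℤ) < 2 * |a| := by linarith
  set q := (c + |a|) / (2 * |a|) with hq
  have hdiv : 2 * |a| * q + (c + |a|) % (2 * |a|) = c + |a| := Int.mul_ediv_add_emod _ _
  have hr0 : 0 ≤ (c + |a|) % (2 * |a|) := Int.emod_nonneg _ (by positivity)
  have hr1 : (c + |a|) % (2 * |a|) < 2 * |a| := Int.emod_lt_of_pos _ hm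
  rcases le_or_gt 0 a with h | h
  · refine ⟨-q, ?_⟩
    have habs : |a| = a := abs_of_nonneg h
    rw [habs] at hdiv hr0 hr1
    rw [habs, abs_le]
    constructor <;> linarith
  · refine ⟨q, ?_⟩
    have habs : |a| = -a := abs_of_neg h
    rw [habs] at hdiv hr0 hr1
    rw [habs, abs_le]
    constructor <;> linarith

private lemma gcd_update {m : ℕ} (b : Fin m → ℤ) (i j : Fin m) (hij : i ≠ j) (k : ℤ) :
    Finset.univ.gcd (Function.update b i (b i + 2 * k * b j)) = Finset.univ.gcd b := by
  set b' := Function.update b i (b i + 2 * k * b j) with hb'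
  have hj : b' j = b j := Function.update_of_ne (Ne.symm hij) _ _
  have h1 : Finset.univ.gcd b ∣ Finset.univ.gcd b' := by
    apply Finset.dvd_gcd
    intro x _
    rcases eq_or_ne x i with rfl | hx
    · rw [hb', Function.update_self]
      exact dvd_add (Finset.gcd_dvd (Finset.mem_univ x))
        (Dvd.dvd.mul_left (Finset.gcd_dvd (Finset.mem_univ j)) _)
    · rw [hb', Function.update_of_ne hx]
      exact Finset.gcd_dvd (Finset.mem_univ x)
  have h2 : Finset.univ.gcd b' ∣ Finset.univ.gcd b := by
    apply Finset.dvd_gcd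
    intro x _
    rcases eq_or_ne x i with rfl | hx
    · have : b x = b' x - 2 * k * b' j := by
        rw [hj, hb', Function.update_self]; ring
      rw [this]
      exact dvd_sub (Finset.gcd_dvd (Finset.mem_univ x))
        (Dvd.dvd.mul_left (Finset.gcd_dvd (Finset.mem_univ j)) _)
    · rw [← Function.update_of_ne hx (b i + 2 * k * b j) b, ← hb']
      exact Finset.gcd_dvd (Finset.mem_univ x)
  exact Int.dvd_antisymm
    (Int.nonneg_of_normalize_eq_self Finset.normalize_gcd)
    (Int.nonneg_of_normalize_eq_self Finset.normalize_gcd) h2 h1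

private def StmtRel (r : ℕ) : (Fin (r + 1) → ℤ) → (Fin (r + 1) → ℤ) → Prop := fun v w =>
  (∃ i, w = Function.update v i (-(v i))) ∨
  (∃ (i j : Fin (r + 1)) (k : ℤ), i ≠ j ∧
    w = Function.update v i (v i + 2 * k * v j))

private lemma sum_natAbs_update {m : ℕ} (b : Fin m → ℤ) (i : Fin m) (v : ℤ) :
    ∑ x, (Function.update b i v x).natAbs
      = (∑ x, (b x).natAbs) - (b i).natAbs + v.natAbs := by
  have e1 : ∑ x, (Function.update b i v x).natAbs
      = (Function.update b i v i).natAbs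
        + ∑ x ∈ Finset.univ.erase i, (Function.update b i v x).natAbs :=
    (Finset.add_sum_erase _ (fun x => (Function.update b i v x).natAbs) (Finset.mem_univ i)).symm
  have e2 : ∑ x ∈ Finset.univ.erase i, (Function.update b i v x).natAbs
      = ∑ x ∈ Finset.univ.erase i, (b x).natAbs :=
    Finset.sum_congr rfl (fun x hx => by rw [Function.update_of_ne (Finset.ne_of_mem_erase hx)])
  have e3 : (b i).natAbs + ∑ x ∈ Finset.univ.erase i, (b x).natAbs = ∑ x, (b x).natAbs :=
    Finset.add_sum_erase _ (fun x => (b x).natAbs) (Finset.mem_univ i)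
  rw [e1, e2, Function.update_self]
  omega

private lemma main_aux (r n : ℕ) : ∀ b : Fin (r + 1) → ℤ,
    (∑ i, (b i).natAbs) < n →
    Finset.univ.gcd b = 1 → Odd (b 0) → (∀ i, i ≠ 0 → Even (b i)) →
    Relation.ReflTransGen (StmtRel r) b (fun i => if i = 0 then 1 else 0) := by
  induction n with
  | zero => intro b h; omega
  | succ n ih =>
    intro b hb hgcd hodd heven
    have hb0 : b 0 ≠ 0 := by
      rintro h
      rw [h] at hodd
      exact (Int.not_odd_iff_even.mpr Even.zero) hodd
    by_cases hz : ∀ i : Fin (r + 1), i ≠ 0 → b i = 0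
    · -- all other components are zero; b 0 is a unit
      have hdvd : b 0 ∣ 1 := by
        rw [← hgcd]
        apply Finset.dvd_gcd
        intro x _
        rcases eq_or_ne x 0 with rfl | hx
        · exact dvd_refl _
        · rw [hz x hx]; exact dvd_zero _
      rcases Int.isUnit_iff.mp (isUnit_of_dvd_one hdvd) with h1 | h1
      · have : b = fun i => if i = 0 then 1 else 0 := by
          funext x
          rcases eq_or_ne x 0 with rfl | hx
          · simp [h1]
          · simp [hx, hz x hx]
        rw [← this]
      · apply Relation.ReflTransGen.single
        left
        refine ⟨0, ?_⟩
        funext x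
        rcases eq_or_ne x 0 with rfl | hx
        · simp [h1]
        · simp [hx, Function.update_of_ne hx, hz x hx]
    · push_neg at hz
      obtain ⟨i, hi0, hbi⟩ := hz
      have hparity : |b i| ≠ |b 0| := by
        intro h
        rcases abs_eq_abs.mp h with h | h
        · exact (Int.not_odd_iff_even.mpr (h ▸ heven i hi0)) hodd
        · have : Even (-(b 0)) := h ▸ heven i hi0
          exact (Int.not_odd_iff_even.mpr (even_neg.mp this)) hodd
      rcases lt_or_gt_of_ne hparity with hlt | hgt
      · -- |b i| < |b 0| : reduce b 0 using b i
        obtain ⟨k, hk⟩ := exists_reduce (b i) (b 0) hbi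
        set v := b 0 + 2 * k * b i with hv
        have hvodd : Odd v := by
          refine hodd.add_even ⟨k * b i, by ring⟩
        have hvne : |v| ≠ |b i| := by
          intro h
          rcases abs_eq_abs.mp h with h | h
          · exact (Int.not_odd_iff_even.mpr (h ▸ heven i hi0)) hvodd
          · have : Even (-(b i)) := (heven i hi0).neg
            exact (Int.not_odd_iff_even.mpr (h ▸ this)) hvodd
        have hvlt : |v| < |b 0| := lt_trans (lt_of_le_of_ne hk hvne) hlt
        have hvnat : v.natAbs < (b 0).natAbs := by
          rw [Int.abs_eq_natAbs, Int.abs_eq_natAbs] at hvlt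
          exact_mod_cast hvlt
        set b' := Function.update b 0 v with hb'
        have hstep : StmtRel r b b' := Or.inr ⟨0, i, k, Ne.symm hi0, rfl⟩
        refine Relation.ReflTransGen.head hstep (ih b' ?_ ?_ ?_ ?_)
        · rw [hb', sum_natAbs_update]
          have hle : (b 0).natAbs ≤ ∑ x, (b x).natAbs :=
            Finset.single_le_sum (f := fun x => (b x).natAbs) (fun _ _ => Nat.zero_le _)
              (Finset.mem_univ 0)
          omega
        · rw [hb', hv, ← hgcd]
          exact gcd_update b 0 i (Ne.symm hi0) k
        · rw [hb', Function.update_self]; exact hvodd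
        · intro x hx
          rw [hb', Function.update_of_ne hx]
          exact heven x hx
      · -- |b i| > |b 0| : reduce b i using b 0
        obtain ⟨k, hk⟩ := exists_reduce (b 0) (b i) hb0
        set v := b i + 2 * k * b 0 with hv
        have hveven : Even v := (heven i hi0).add ⟨k * b 0, by ring⟩
        have hvne : |v| ≠ |b 0| := by
          intro h
          rcases abs_eq_abs.mp h with h | h
          · exact (Int.not_odd_iff_even.mpr (h ▸ hveven)) hodd
          · have : Even (-(b 0)) := h ▸ hveven
            exact (Int.not_odd_iff_even.mpr (even_neg.mp this)) hodd
        have hvlt : |v| < |b i| := lt_trans (lt_of_le_of_ne hk hvne) hgt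
        have hvnat : v.natAbs < (b i).natAbs := by
          rw [Int.abs_eq_natAbs, Int.abs_eq_natAbs] at hvlt
          exact_mod_cast hvlt
        set b' := Function.update b i v with hb'
        have hstep : StmtRel r b b' := Or.inr ⟨i, 0, k, hi0, rfl⟩
        refine Relation.ReflTransGen.head hstep (ih b' ?_ ?_ ?_ ?_)
        · rw [hb', sum_natAbs_update]
          have hle : (b i).natAbs ≤ ∑ x, (b x).natAbs :=
            Finset.single_le_sum (f := fun x => (b x).natAbs) (fun _ _ => Nat.zero_le _)
              (Finset.mem_univ i)
          omega
        · rw [hb', hv, ← hgcd]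
          exact gcd_update b i 0 hi0 k
        · rw [hb', Function.update_of_ne (Ne.symm hi0)]; exact hodd
        · intro x hx
          rcases eq_or_ne x i with rfl | hxi
          · rw [hb', Function.update_self]; exact hveven
          · rw [hb', Function.update_of_ne hxi]
            exact heven x hx

/-- A vector of nonnegative integers with gcd 1, whose first component is odd
and whose other components are even, can be transformed into the standard basis vector
`(1,0,…,0)` by a sequence of operations, each negating a component or adding an even
multiple of one component to another. -/
theorem stmt1 (r : ℕ) (b : Fin (r + 1) → ℤ)
    (hnonneg : ∀ i, 0 ≤ b i)
    (hgcd : Finset.univ.gcd b = 1)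
    (hodd : Odd (b 0))
    (heven : ∀ i, i ≠ 0 → Even (b i)) :
    Relation.ReflTransGen
      (fun v w =>
        (∃ i, w = Function.update v i (-(v i))) ∨
        (∃ (i j : Fin (r + 1)) (k : ℤ), i ≠ j ∧
          w = Function.update v i (v i + 2 * k * v j)))
      b (fun i => if i = 0 then 1 else 0) := by
  exact main_aux r ((∑ i, (b i).natAbs) + 1) b (Nat.lt_succ_self _) hgcd hodd heven
end

section
/- Let Q be a symmetric integer r×r matrix congruent to the identity modulo 2, and let Q̃ be the 2r×2r integer matrix obtained from Q by replacing each odd entry 2m−1 by the 2×2 block [[m,1],[1,2]] and each even entry 2a by the block [[a,0],[0,0]]. Then det Q̃ = det Q. -/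
/-- The matrix `Q̃` associated to an integer matrix `Q ≡ I (mod 2)`: each odd entry
`2m−1` is replaced by the block `[[m,1],[1,2]]` (placed on the diagonal blocks) and each
even entry `2a` by `[[a,0],[0,0]]`. -/
def tildeMat (r : ℕ) (Q : Matrix (Fin r) (Fin r) ℤ) :
    Matrix (Fin (2 * r)) (Fin (2 * r)) ℤ :=
  Matrix.of fun i j =>
    have hi : (i : ℕ) / 2 < r := by have := i.isLt; omega
    have hj : (j : ℕ) / 2 < r := by have := j.isLt; omega
    let e : ℤ := Q ⟨(i : ℕ) / 2, hi⟩ ⟨(j : ℕ) / 2, hj⟩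
    if (i : ℕ) / 2 = (j : ℕ) / 2 then
      -- diagonal entry of Q, odd, equal to 2m−1 with m = (e+1)/2: block [[m,1],[1,2]]
      if (i : ℕ) % 2 = 0 then
        (if (j : ℕ) % 2 = 0 then (e + 1) / 2 else 1)
      else
        (if (j : ℕ) % 2 = 0 then 1 else 2)
    else
      -- off-diagonal entry of Q, even, equal to 2a with a = e/2: block [[a,0],[0,0]]
      if (i : ℕ) % 2 = 0 ∧ (j : ℕ) % 2 = 0 then e / 2 else 0

/-- Interleaving equivalence: `inl i ↦ 2i`, `inr i ↦ 2i+1`. -/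
def interleave (r : ℕ) : (Fin r ⊕ Fin r) ≃ Fin (2 * r) where
  toFun x := match x with
    | .inl i => ⟨2 * (i : ℕ), by have := i.isLt; omega⟩
    | .inr i => ⟨2 * (i : ℕ) + 1, by have := i.isLt; omega⟩
  invFun k :=
    if (k : ℕ) % 2 = 0 then
      Sum.inl ⟨(k : ℕ) / 2, by have := k.isLt; omega⟩
    else
      Sum.inr ⟨(k : ℕ) / 2, by have := k.isLt; omega⟩
  left_inv := by
    rintro (i | i)
    · simp [Nat.mul_div_cancel_left]
    · have h1 : (2 * (i : ℕ) + 1) % 2 = 1 := by omega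
      have h2 : (2 * (i : ℕ) + 1) / 2 = (i : ℕ) := by omega
      simp [h1, h2]
  right_inv k := by
    by_cases h : (k : ℕ) % 2 = 0 <;> simp only [h, if_true, if_false, reduceIte] <;>
      apply Fin.ext <;> simp <;> omega

/-- `det Q̃ = det Q` for `Q` symmetric and congruent to `I` modulo 2. -/
theorem stmt3 (r : ℕ) (Q : Matrix (Fin r) (Fin r) ℤ)
    (hsymm : Q.IsSymm)
    (hodd : ∀ i, Odd (Q i i))
    (heven : ∀ i j, i ≠ j → Even (Q i j)) :
    (tildeMat r Q).det = Q.det := by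
  classical
  set M : Matrix (Fin r) (Fin r) ℤ :=
    Matrix.of (fun i j => if i = j then (Q i j + 1) / 2 else Q i j / 2) with hM
  have key : tildeMat r Q =
      (Matrix.fromBlocks M 1 1 ((2 : ℤ) • 1)).submatrix
        (interleave r).symm (interleave r).symm := by
    ext i j
    have hi2 : (i : ℕ) / 2 < r := by omega
    have hj2 : (j : ℕ) / 2 < r := by omega
    have hsymm_i : (interleave r).symm i =
        if (i : ℕ) % 2 = 0 then Sum.inl ⟨(i : ℕ) / 2, hi2⟩ else Sum.inr ⟨(i : ℕ) / 2, hi2⟩ := rfl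
    have hsymm_j : (interleave r).symm j =
        if (j : ℕ) % 2 = 0 then Sum.inl ⟨(j : ℕ) / 2, hj2⟩ else Sum.inr ⟨(j : ℕ) / 2, hj2⟩ := rfl
    rw [Matrix.submatrix_apply, hsymm_i, hsymm_j]
    by_cases hi : (i : ℕ) % 2 = 0 <;> by_cases hj : (j : ℕ) % 2 = 0 <;>
      simp only [tildeMat, hi, hj, if_true, if_false, Matrix.of_apply, if_pos, if_neg,
        Matrix.fromBlocks_apply₁₁, Matrix.fromBlocks_apply₁₂, Matrix.fromBlocks_apply₂₁,
        Matrix.fromBlocks_apply₂₂, Matrix.smul_apply, Matrix.one_apply, hM] <;>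
      by_cases hd : (i : ℕ) / 2 = (j : ℕ) / 2 <;>
      simp_all [Fin.ext_iff, Matrix.one_apply] <;> omega
  have hfactor : Matrix.fromBlocks M (1 : Matrix (Fin r) (Fin r) ℤ)
      (1 : Matrix (Fin r) (Fin r) ℤ) ((2 : ℤ) • 1 : Matrix (Fin r) (Fin r) ℤ) =
      Matrix.fromBlocks M (1 - M) 1 1 *
        (Matrix.fromBlocks 1 1 0 1 : Matrix (Fin r ⊕ Fin r) (Fin r ⊕ Fin r) ℤ) := by
    have h12 : M * 1 + (1 - M) * 1 = (1 : Matrix (Fin r) (Fin r) ℤ) := by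
      simp
    have h22 : (1 : Matrix (Fin r) (Fin r) ℤ) * 1 + 1 * 1 = (2 : ℤ) • 1 := by
      simp [two_smul]
    rw [Matrix.fromBlocks_multiply]
    simp [h12, h22]
    norm_num
  have h2M : (2 : ℤ) • M - 1 = Q := by
    ext i j
    by_cases h : i = j
    · subst h
      obtain ⟨m, hm⟩ := hodd i
      simp [hM, hm, smul_eq_mul, Matrix.one_apply]
      omega
    · obtain ⟨a, ha⟩ := heven i j h
      simp [hM, ha, h, smul_eq_mul, Matrix.one_apply]
      omega
  rw [key, Matrix.det_submatrix_equiv_self, hfactor, Matrix.det_mul,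
    Matrix.det_fromBlocks_zero₂₁, Matrix.det_one, Matrix.det_fromBlocks_one₂₂]
  simp only [one_mul, mul_one, Matrix.mul_one]
  congr 1
  rw [← h2M, two_smul]
  abel
end

section
/- Let Q be a symmetric integer r×r matrix congruent to the identity modulo 2 and let Q̃ be the associated 2r×2r matrix defined by the block substitution (odd entry 2m−1 ↦ [[m,1],[1,2]], even entry 2a ↦ [[a,0],[0,0]]). Then the leading principal minors satisfy Δ_{2k}(Q̃) = Δ_k(Q) and Δ_{2k−1}(Q̃) = (Δ_{2k−2}(Q̃) + Δ_{2k}(Q̃))/2 for all k, where Δ_0 = 1. -/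
/-- `Δ_k(M)`: the leading principal `k × k` minor of `M`. -/
def pminor {n : ℕ} (M : Matrix (Fin n) (Fin n) ℤ) (k : ℕ) (h : k ≤ n) : ℤ :=
  (M.submatrix (Fin.castLE h) (Fin.castLE h)).det

open Matrix

lemma pminor_congr {n : ℕ} (M : Matrix (Fin n) (Fin n) ℤ) {k l : ℕ} (h : k = l)
    (hk : k ≤ n) (hl : l ≤ n) : pminor M k hk = pminor M l hl := by subst h; rfl

lemma tilde_ee {r : ℕ} {Q : Matrix (Fin r) (Fin r) ℤ} {i j : Fin (2*r)} {a b : Fin r}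
    (ha : (i : ℕ) = 2 * a) (hb : (j : ℕ) = 2 * b) :
    tildeMat r Q i j = if a = b then (Q a b + 1) / 2 else Q a b / 2 := by
  have h1 : (i:ℕ)/2 = (a:ℕ) := by omega
  have h2 : (j:ℕ)/2 = (b:ℕ) := by omega
  have h3 : (i:ℕ)%2 = 0 := by omega
  have h4 : (j:ℕ)%2 = 0 := by omega
  simp only [tildeMat, Matrix.of_apply, h1, h2, h3, h4, Fin.eta]
  by_cases hab : a = b <;> simp [hab, Fin.val_inj]

lemma tilde_eo {r : ℕ} {Q : Matrix (Fin r) (Fin r) ℤ} {i j : Fin (2*r)} {a b : Fin r}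
    (ha : (i : ℕ) = 2 * a) (hb : (j : ℕ) = 2 * b + 1) :
    tildeMat r Q i j = if a = b then 1 else 0 := by
  have h1 : (i:ℕ)/2 = (a:ℕ) := by omega
  have h2 : (j:ℕ)/2 = (b:ℕ) := by omega
  have h3 : (i:ℕ)%2 = 0 := by omega
  have h4 : (j:ℕ)%2 = 1 := by omega
  simp only [tildeMat, Matrix.of_apply, h1, h2, h3, h4, Fin.eta]
  by_cases hab : a = b <;> simp [hab, Fin.val_inj]

lemma tilde_oe {r : ℕ} {Q : Matrix (Fin r) (Fin r) ℤ} {i j : Fin (2*r)} {a b : Fin r}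
    (ha : (i : ℕ) = 2 * a + 1) (hb : (j : ℕ) = 2 * b) :
    tildeMat r Q i j = if a = b then 1 else 0 := by
  have h1 : (i:ℕ)/2 = (a:ℕ) := by omega
  have h2 : (j:ℕ)/2 = (b:ℕ) := by omega
  have h3 : (i:ℕ)%2 = 1 := by omega
  have h4 : (j:ℕ)%2 = 0 := by omega
  simp only [tildeMat, Matrix.of_apply, h1, h2, h3, h4, Fin.eta]
  by_cases hab : a = b <;> simp [hab, Fin.val_inj]

lemma tilde_oo {r : ℕ} {Q : Matrix (Fin r) (Fin r) ℤ} {i j : Fin (2*r)} {a b : Fin r}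
    (ha : (i : ℕ) = 2 * a + 1) (hb : (j : ℕ) = 2 * b + 1) :
    tildeMat r Q i j = if a = b then 2 else 0 := by
  have h1 : (i:ℕ)/2 = (a:ℕ) := by omega
  have h2 : (j:ℕ)/2 = (b:ℕ) := by omega
  have h3 : (i:ℕ)%2 = 1 := by omega
  have h4 : (j:ℕ)%2 = 1 := by omega
  simp only [tildeMat, Matrix.of_apply, h1, h2, h3, h4, Fin.eta]
  by_cases hab : a = b <;> simp [hab, Fin.val_inj]

def evenOdd (k : ℕ) : Fin k ⊕ Fin k ≃ Fin (2 * k) where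
  toFun x := Sum.elim (fun s : Fin k => (⟨2 * s, by have := s.isLt; omega⟩ : Fin (2*k)))
    (fun s : Fin k => (⟨2 * s + 1, by have := s.isLt; omega⟩ : Fin (2*k))) x
  invFun i := if _ : (i : ℕ) % 2 = 0 then Sum.inl ⟨(i : ℕ) / 2, by have := i.isLt; omega⟩
    else Sum.inr ⟨(i : ℕ) / 2, by have := i.isLt; omega⟩
  left_inv x := by
    rcases x with s | s <;> dsimp only [Sum.elim_inl, Sum.elim_inr]
    · rw [dif_pos (show 2 * (s:ℕ) % 2 = 0 by omega)]
      exact congrArg Sum.inl (Fin.ext (show 2 * (s:ℕ) / 2 = s by omega))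
    · rw [dif_neg (show ¬(2 * (s:ℕ) + 1) % 2 = 0 by omega)]
      exact congrArg Sum.inr (Fin.ext (show (2 * (s:ℕ) + 1) / 2 = s by omega))
  right_inv i := by
    by_cases h : (i : ℕ) % 2 = 0 <;> dsimp only
    · rw [dif_pos h]; exact Fin.ext (show 2 * ((i:ℕ)/2) = i by omega)
    · rw [dif_neg h]; exact Fin.ext (show 2 * ((i:ℕ)/2) + 1 = i by omega)

@[simp] lemma evenOdd_inl (k : ℕ) (s : Fin k) : ((evenOdd k (Sum.inl s) : Fin (2*k)) : ℕ) = 2 * s := rfl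
@[simp] lemma evenOdd_inr (k : ℕ) (s : Fin k) : ((evenOdd k (Sum.inr s) : Fin (2*k)) : ℕ) = 2 * s + 1 := rfl

def evenOdd' (m : ℕ) : Fin (m+1) ⊕ Fin m ≃ Fin (2 * m + 1) where
  toFun x := Sum.elim (fun s : Fin (m+1) => (⟨2 * s, by have := s.isLt; omega⟩ : Fin (2*m+1)))
    (fun s : Fin m => (⟨2 * s + 1, by have := s.isLt; omega⟩ : Fin (2*m+1))) x
  invFun i := if _ : (i : ℕ) % 2 = 0 then Sum.inl ⟨(i : ℕ) / 2, by have := i.isLt; omega⟩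
    else Sum.inr ⟨(i : ℕ) / 2, by have := i.isLt; omega⟩
  left_inv x := by
    rcases x with s | s <;> dsimp only [Sum.elim_inl, Sum.elim_inr]
    · rw [dif_pos (show 2 * (s:ℕ) % 2 = 0 by omega)]
      exact congrArg Sum.inl (Fin.ext (show 2 * (s:ℕ) / 2 = s by omega))
    · rw [dif_neg (show ¬(2 * (s:ℕ) + 1) % 2 = 0 by omega)]
      exact congrArg Sum.inr (Fin.ext (show (2 * (s:ℕ) + 1) / 2 = s by omega))
  right_inv i := by
    by_cases h : (i : ℕ) % 2 = 0 <;> dsimp only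
    · rw [dif_pos h]; exact Fin.ext (show 2 * ((i:ℕ)/2) = i by omega)
    · rw [dif_neg h]; exact Fin.ext (show 2 * ((i:ℕ)/2) + 1 = i by omega)

@[simp] lemma evenOdd'_inl (m : ℕ) (s : Fin (m+1)) : ((evenOdd' m (Sum.inl s) : Fin (2*m+1)) : ℕ) = 2 * s := rfl
@[simp] lemma evenOdd'_inr (m : ℕ) (s : Fin m) : ((evenOdd' m (Sum.inr s) : Fin (2*m+1)) : ℕ) = 2 * s + 1 := rfl

/-- Part 1: `Δ_{2k}(Q̃) = Δ_k(Q)`. -/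
lemma even_minor (r : ℕ) (Q : Matrix (Fin r) (Fin r) ℤ)
    (hodd : ∀ i, Odd (Q i i))
    (heven : ∀ i j, i ≠ j → Even (Q i j))
    (k : ℕ) (hk : k ≤ r) (h2k : 2 * k ≤ 2 * r) :
    pminor (tildeMat r Q) (2 * k) h2k = pminor Q k hk := by
  set M : Matrix (Fin (2*k)) (Fin (2*k)) ℤ :=
    (tildeMat r Q).submatrix (Fin.castLE h2k) (Fin.castLE h2k) with hM
  set A : Matrix (Fin k) (Fin k) ℤ :=
    fun s t => M (evenOdd k (Sum.inl s)) (evenOdd k (Sum.inl t)) with hA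
  have hsub : M.submatrix (evenOdd k) (evenOdd k)
      = fromBlocks A 1 1 ((2:ℤ) • 1) := by
    ext x y
    rcases x with s | s <;> rcases y with t | t
    · rfl
    · show M _ _ = (1 : Matrix (Fin k) (Fin k) ℤ) s t
      rw [hM, Matrix.submatrix_apply,
        tilde_eo (a := Fin.castLE hk s) (b := Fin.castLE hk t) (by simp) (by simp)]
      simp only [Matrix.one_apply, Fin.ext_iff, Fin.coe_castLE]
    · show M _ _ = (1 : Matrix (Fin k) (Fin k) ℤ) s t
      rw [hM, Matrix.submatrix_apply,
        tilde_oe (a := Fin.castLE hk s) (b := Fin.castLE hk t) (by simp) (by simp)]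
      simp only [Matrix.one_apply, Fin.ext_iff, Fin.coe_castLE]
    · show M _ _ = ((2:ℤ) • (1 : Matrix (Fin k) (Fin k) ℤ)) s t
      rw [hM, Matrix.submatrix_apply,
        tilde_oo (a := Fin.castLE hk s) (b := Fin.castLE hk t) (by simp) (by simp)]
      simp only [Matrix.smul_apply, Matrix.one_apply, Fin.ext_iff, Fin.coe_castLE, smul_eq_mul]
      split <;> simp_all [Fin.ext_iff]
  have hQA : (2:ℤ) • A - 1 = Q.submatrix (Fin.castLE hk) (Fin.castLE hk) := by
    ext s t
    have hent : M (evenOdd k (Sum.inl s)) (evenOdd k (Sum.inl t))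
        = if (Fin.castLE hk s) = (Fin.castLE hk t)
          then (Q (Fin.castLE hk s) (Fin.castLE hk t) + 1) / 2
          else Q (Fin.castLE hk s) (Fin.castLE hk t) / 2 := by
      rw [hM, Matrix.submatrix_apply]
      exact tilde_ee (by simp) (by simp)
    simp only [Matrix.sub_apply, Matrix.smul_apply]
    simp only [Matrix.sub_apply, Matrix.smul_apply, hA, hent, Matrix.one_apply,
      Matrix.submatrix_apply, smul_eq_mul]
    by_cases hst : s = t
    · subst hst
      obtain ⟨z, hz⟩ := hodd (Fin.castLE hk s)
      simp [hz]
      omega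
    · have hne : Fin.castLE hk s ≠ Fin.castLE hk t := by
        simpa [Fin.ext_iff] using hst
      obtain ⟨z, hz⟩ := heven _ _ hne
      simp only [if_neg hne, if_neg hst, hz]
      omega
  have key : (fromBlocks ((2:ℤ) • 1) (-1) 0 1 : Matrix (Fin k ⊕ Fin k) (Fin k ⊕ Fin k) ℤ)
      * fromBlocks A 1 1 ((2:ℤ) • 1)
      = fromBlocks ((2:ℤ) • A - 1) 0 1 ((2:ℤ) • 1) := by
    rw [Matrix.fromBlocks_multiply]
    have e1 : (2:ℤ) • (1 : Matrix (Fin k) (Fin k) ℤ) * A + (-1) * 1 = (2:ℤ) • A - 1 := by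
      simp [Matrix.smul_mul, sub_eq_add_neg]
    have e2 : (2:ℤ) • (1 : Matrix (Fin k) (Fin k) ℤ) * 1 + (-1) * ((2:ℤ) • 1) = 0 := by
      simp [Matrix.mul_smul]
    have e3 : (0 : Matrix (Fin k) (Fin k) ℤ) * A + 1 * 1 = 1 := by simp
    have e4 : (0 : Matrix (Fin k) (Fin k) ℤ) * 1 + 1 * ((2:ℤ) • 1) = (2:ℤ) • 1 := by simp
    rw [e1, e2, e3, e4]
  have hdet1 : (fromBlocks ((2:ℤ) • 1) (-1) 0 1 :
      Matrix (Fin k ⊕ Fin k) (Fin k ⊕ Fin k) ℤ).det = 2 ^ k := by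
    rw [Matrix.det_fromBlocks_zero₂₁, Matrix.det_one, mul_one, Matrix.det_smul,
      Matrix.det_one, mul_one, Fintype.card_fin]
  have hdet2 : (fromBlocks ((2:ℤ) • A - 1) 0 1 ((2:ℤ) • 1) :
      Matrix (Fin k ⊕ Fin k) (Fin k ⊕ Fin k) ℤ).det
      = ((2:ℤ) • A - 1).det * 2 ^ k := by
    rw [Matrix.det_fromBlocks_zero₁₂, Matrix.det_smul, Matrix.det_one, mul_one,
      Fintype.card_fin]
  have hfinal : (2:ℤ)^k * M.det = ((2:ℤ) • A - 1).det * 2 ^ k := by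
    calc (2:ℤ)^k * M.det
        = (fromBlocks ((2:ℤ) • 1) (-1) 0 1 :
            Matrix (Fin k ⊕ Fin k) (Fin k ⊕ Fin k) ℤ).det
          * (M.submatrix (evenOdd k) (evenOdd k)).det := by
          rw [hdet1, Matrix.det_submatrix_equiv_self]
      _ = ((2:ℤ) • A - 1).det * 2 ^ k := by
          rw [← Matrix.det_mul, hsub, key, hdet2]
  have h2k0 : (2:ℤ)^k ≠ 0 := by positivity
  have hMdet : M.det = ((2:ℤ) • A - 1).det := by
    apply mul_left_cancel₀ h2k0
    rw [hfinal]; ring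
  show M.det = _
  rw [hMdet, hQA]
  rfl

lemma det_updateRow_single {n : ℕ} (W : Matrix (Fin (n+1)) (Fin (n+1)) ℤ) :
    (W.updateRow (Fin.last n) (Pi.single (Fin.last n) 1)).det
      = (W.submatrix Fin.castSucc Fin.castSucc).det := by
  rw [Matrix.det_succ_row _ (Fin.last n)]
  rw [Finset.sum_eq_single (Fin.last n)]
  · rw [Matrix.updateRow_self, Pi.single_eq_same, Fin.succAbove_last]
    have hpow : (-1:ℤ) ^ (((Fin.last n):ℕ) + ((Fin.last n):ℕ)) = 1 :=
      Even.neg_one_pow ⟨n, by simp⟩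
    rw [hpow, one_mul, one_mul]
    congr 1
    ext s t
    rw [Matrix.submatrix_apply, Matrix.submatrix_apply,
      Matrix.updateRow_ne (Fin.castSucc_lt_last s).ne]
  · intro j _ hj
    rw [Matrix.updateRow_self, Pi.single_eq_of_ne hj, mul_zero, zero_mul]
  · intro hmem; exact absurd (Finset.mem_univ _) hmem

lemma odd_minor (r : ℕ) (Q : Matrix (Fin r) (Fin r) ℤ)
    (hodd : ∀ i, Odd (Q i i)) (heven : ∀ i j, i ≠ j → Even (Q i j))
    (m : ℕ) (hk : m + 1 ≤ r) (hm : m ≤ r) (h : 2 * m + 1 ≤ 2 * r) :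
    2 * pminor (tildeMat r Q) (2 * m + 1) h = pminor Q m hm + pminor Q (m+1) hk := by
  set M : Matrix (Fin (2*m+1)) (Fin (2*m+1)) ℤ :=
    (tildeMat r Q).submatrix (Fin.castLE h) (Fin.castLE h) with hM
  set A : Matrix (Fin (m+1)) (Fin (m+1)) ℤ :=
    fun s t => M (evenOdd' m (Sum.inl s)) (evenOdd' m (Sum.inl t)) with hA
  set B : Matrix (Fin (m+1)) (Fin m) ℤ :=
    fun s t => if (s:ℕ) = (t:ℕ) then 1 else 0 with hB
  set C : Matrix (Fin m) (Fin (m+1)) ℤ :=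
    fun s t => if (s:ℕ) = (t:ℕ) then 1 else 0 with hC
  have hsub : M.submatrix (evenOdd' m) (evenOdd' m)
      = fromBlocks A B C ((2:ℤ) • 1) := by
    ext x y
    rcases x with s | s <;> rcases y with t | t
    · rfl
    · show M _ _ = B s t
      rw [hM, Matrix.submatrix_apply,
        tilde_eo (a := Fin.castLE hk s) (b := Fin.castLE hm t) (by simp) (by simp)]
      simp [hB, Fin.ext_iff]
    · show M _ _ = C s t
      rw [hM, Matrix.submatrix_apply,
        tilde_oe (a := Fin.castLE hm s) (b := Fin.castLE hk t) (by simp) (by simp)]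
      simp [hC, Fin.ext_iff]
    · show M _ _ = ((2:ℤ) • (1 : Matrix (Fin m) (Fin m) ℤ)) s t
      rw [hM, Matrix.submatrix_apply,
        tilde_oo (a := Fin.castLE hm s) (b := Fin.castLE hm t) (by simp) (by simp)]
      simp only [Matrix.smul_apply, Matrix.one_apply, Fin.ext_iff, Fin.coe_castLE, smul_eq_mul]
      split <;> simp_all [Fin.ext_iff]
  have hBC : B * C = fun s t : Fin (m+1) =>
      if (s:ℕ) = (t:ℕ) ∧ (s:ℕ) < m then 1 else 0 := by
    ext s t
    rw [Matrix.mul_apply]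
    by_cases hs : (s:ℕ) < m
    · rw [Finset.sum_eq_single (⟨(s:ℕ), hs⟩ : Fin m)]
      · by_cases hst : (s:ℕ) = (t:ℕ)
        · have ht : (t:ℕ) < m := hst ▸ hs
          simp [hB, hC, hst, hs, ht]
        · simp [hB, hC, hst, hs]
      · intro u _ hu
        have hne : ¬ (s:ℕ) = (u:ℕ) := fun hh => hu (Fin.ext hh.symm)
        simp [hB, hne]
      · intro hmem; exact absurd (Finset.mem_univ _) hmem
    · rw [Finset.sum_eq_zero]
      · simp [hs]
      · intro u _
        have hne : ¬ (s:ℕ) = (u:ℕ) := by have := u.isLt; omega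
        simp [hB, hne]
  set W : Matrix (Fin (m+1)) (Fin (m+1)) ℤ :=
    Q.submatrix (Fin.castLE hk) (Fin.castLE hk) with hW
  have hcorner : (2:ℤ) • A - B * C
      = W.updateRow (Fin.last m) (W (Fin.last m) + Pi.single (Fin.last m) 1) := by
    ext s t
    have hent : M (evenOdd' m (Sum.inl s)) (evenOdd' m (Sum.inl t))
        = if (Fin.castLE hk s) = (Fin.castLE hk t)
          then (Q (Fin.castLE hk s) (Fin.castLE hk t) + 1) / 2
          else Q (Fin.castLE hk s) (Fin.castLE hk t) / 2 := by
      rw [hM, Matrix.submatrix_apply]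
      exact tilde_ee (by simp) (by simp)
    simp only [Matrix.sub_apply, Matrix.smul_apply]
    simp only [Matrix.sub_apply, Matrix.smul_apply, smul_eq_mul, hBC, hA, hent,
      Matrix.updateRow_apply, Pi.add_apply, Pi.single_apply, hW, Matrix.submatrix_apply]
    by_cases hst : s = t
    · subst hst
      obtain ⟨z, hz⟩ := hodd (Fin.castLE hk s)
      by_cases hsl : s = Fin.last m
      · subst hsl
        simp [hz]
        omega
      · have hlt : (s:ℕ) < m := Fin.val_lt_last hsl
        simp [hz, hlt, hsl]
        omega
    · have hne : Fin.castLE hk s ≠ Fin.castLE hk t := by simpa [Fin.ext_iff] using hst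
      obtain ⟨z, hz⟩ := heven _ _ hne
      have hvne : ¬ (s:ℕ) = (t:ℕ) := by simpa [Fin.ext_iff] using hst
      by_cases hsl : s = Fin.last m
      · subst hsl
        have htl : ¬ t = Fin.last m := fun hh => hst hh.symm
        simp [hz, hvne, hne, htl]
        omega
      · simp [hz, hvne, hne, hsl]
        omega
  have key : (fromBlocks ((2:ℤ) • 1) (-B) 0 1 :
        Matrix (Fin (m+1) ⊕ Fin m) (Fin (m+1) ⊕ Fin m) ℤ)
      * fromBlocks A B C ((2:ℤ) • 1)
      = fromBlocks ((2:ℤ) • A - B * C) 0 C ((2:ℤ) • 1) := by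
    rw [Matrix.fromBlocks_multiply]
    have e1 : (2:ℤ) • (1 : Matrix (Fin (m+1)) (Fin (m+1)) ℤ) * A + (-B) * C
        = (2:ℤ) • A - B * C := by
      simp [Matrix.smul_mul, Matrix.neg_mul, sub_eq_add_neg]
    have e2 : (2:ℤ) • (1 : Matrix (Fin (m+1)) (Fin (m+1)) ℤ) * B
        + (-B) * ((2:ℤ) • (1 : Matrix (Fin m) (Fin m) ℤ)) = 0 := by
      rw [Matrix.smul_mul, Matrix.one_mul, Matrix.neg_mul, Matrix.mul_smul, Matrix.mul_one]
      simp
    have e3 : (0 : Matrix (Fin m) (Fin (m+1)) ℤ) * A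
        + (1 : Matrix (Fin m) (Fin m) ℤ) * C = C := by simp
    have e4 : (0 : Matrix (Fin m) (Fin (m+1)) ℤ) * B
        + (1 : Matrix (Fin m) (Fin m) ℤ) * ((2:ℤ) • (1 : Matrix (Fin m) (Fin m) ℤ))
        = (2:ℤ) • (1 : Matrix (Fin m) (Fin m) ℤ) := by simp
    rw [e1, e2, e3, e4]
  have hdet1 : (fromBlocks ((2:ℤ) • 1) (-B) 0 1 :
      Matrix (Fin (m+1) ⊕ Fin m) (Fin (m+1) ⊕ Fin m) ℤ).det = 2 ^ (m+1) := by
    rw [Matrix.det_fromBlocks_zero₂₁, Matrix.det_one, mul_one, Matrix.det_smul,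
      Matrix.det_one, mul_one, Fintype.card_fin]
  have hdet2 : (fromBlocks ((2:ℤ) • A - B * C) 0 C ((2:ℤ) • 1) :
      Matrix (Fin (m+1) ⊕ Fin m) (Fin (m+1) ⊕ Fin m) ℤ).det
      = ((2:ℤ) • A - B * C).det * 2 ^ m := by
    rw [Matrix.det_fromBlocks_zero₁₂, Matrix.det_smul, Matrix.det_one, mul_one,
      Fintype.card_fin]
  have hdetX : ((2:ℤ) • A - B * C).det
      = W.det + (W.submatrix Fin.castSucc Fin.castSucc).det := by
    rw [hcorner, Matrix.det_updateRow_add, Matrix.updateRow_eq_self,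
      det_updateRow_single W]
  have hsubW : W.submatrix Fin.castSucc Fin.castSucc
      = Q.submatrix (Fin.castLE hm) (Fin.castLE hm) := by
    ext s t; rfl
  have hfinal : (2:ℤ)^(m+1) * M.det = ((2:ℤ) • A - B * C).det * 2 ^ m := by
    calc (2:ℤ)^(m+1) * M.det
        = (fromBlocks ((2:ℤ) • 1) (-B) 0 1 :
            Matrix (Fin (m+1) ⊕ Fin m) (Fin (m+1) ⊕ Fin m) ℤ).det
          * (M.submatrix (evenOdd' m) (evenOdd' m)).det := by
          rw [hdet1, Matrix.det_submatrix_equiv_self]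
      _ = ((2:ℤ) • A - B * C).det * 2 ^ m := by
          rw [← Matrix.det_mul, hsub, key, hdet2]
  have h2m0 : (2:ℤ)^m ≠ 0 := by positivity
  have : 2 * M.det = W.det + (Q.submatrix (Fin.castLE hm) (Fin.castLE hm)).det := by
    apply mul_left_cancel₀ h2m0
    have hx : (2:ℤ)^m * (2 * M.det) = (2:ℤ)^(m+1) * M.det := by ring
    rw [hx, hfinal, hdetX, hsubW]
    ring
  show 2 * M.det = _
  rw [this]
  show _ = (Q.submatrix (Fin.castLE hm) (Fin.castLE hm)).det + W.det
  ring

/-- the leading principal minors of `Q̃` satisfy `Δ_{2k}(Q̃) = Δ_k(Q)`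
and `Δ_{2k−1}(Q̃) = (Δ_{2k−2}(Q̃) + Δ_{2k}(Q̃))/2` for all `1 ≤ k ≤ r`. -/
theorem stmt4 (r : ℕ) (Q : Matrix (Fin r) (Fin r) ℤ)
    (hsymm : Q.IsSymm)
    (hodd : ∀ i, Odd (Q i i))
    (heven : ∀ i j, i ≠ j → Even (Q i j)) :
    ∀ k : ℕ, (hk : k ≤ r) →
      pminor (tildeMat r Q) (2 * k) (by omega) = pminor Q k hk ∧
      (1 ≤ k →
        2 * pminor (tildeMat r Q) (2 * k - 1) (by omega) =
          pminor (tildeMat r Q) (2 * k - 2) (by omega) +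
          pminor (tildeMat r Q) (2 * k) (by omega)) := by
  intro k hk
  refine ⟨even_minor r Q hodd heven k hk (by omega), ?_⟩
  intro h1
  obtain ⟨m, rfl⟩ : ∃ m, k = m + 1 := ⟨k - 1, by omega⟩
  rw [pminor_congr (tildeMat r Q) (show 2*(m+1)-1 = 2*m+1 by omega) (by omega) (by omega),
      pminor_congr (tildeMat r Q) (show 2*(m+1)-2 = 2*m by omega) (by omega)
        (show 2*m ≤ 2*r by omega),
      odd_minor r Q hodd heven m hk (by omega) (by omega),
      even_minor r Q hodd heven m (by omega) (show 2*m ≤ 2*r by omega),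
      even_minor r Q hodd heven (m+1) hk (by omega)]
end

section
/- Let Q be a symmetric integer r×r matrix congruent to the identity modulo 2 and Q̃ the associated 2r×2r matrix via the block substitution (2m−1 ↦ [[m,1],[1,2]], 2a ↦ [[a,0],[0,0]]). Then Q is positive definite if and only if Q̃ is positive definite. -/
def evIdx (r : ℕ) (k : Fin r) : Fin (2 * r) := ⟨2 * k, by omega⟩
def odIdx (r : ℕ) (k : Fin r) : Fin (2 * r) := ⟨2 * k + 1, by omega⟩

lemma sum_range_two_mul (n : ℕ) (g : ℕ → ℤ) :
    ∑ i ∈ Finset.range (2 * n), g i = ∑ k ∈ Finset.range n, (g (2 * k) + g (2 * k + 1)) := by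
  induction n with
  | zero => simp
  | succ n ih =>
    have : 2 * (n + 1) = (2 * n + 1) + 1 := by ring
    rw [this, Finset.sum_range_succ, Finset.sum_range_succ, ih, Finset.sum_range_succ]
    ring

lemma sum_split (r : ℕ) (f : Fin (2 * r) → ℤ) :
    ∑ i, f i = ∑ k : Fin r, (f (evIdx r k) + f (odIdx r k)) := by
  set g : ℕ → ℤ := fun i => if h : i < 2 * r then f ⟨i, h⟩ else 0 with hg
  have h1 : ∑ i, f i = ∑ i ∈ Finset.range (2 * r), g i := by
    rw [Finset.sum_range]
    apply Finset.sum_congr rfl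
    intro i _
    simp [hg, i.isLt]
  rw [h1, sum_range_two_mul]
  rw [Finset.sum_range]
  apply Finset.sum_congr rfl
  intro k _
  have h2 : 2 * (k : ℕ) < 2 * r := by omega
  have h3 : 2 * (k : ℕ) + 1 < 2 * r := by omega
  simp only [hg, dif_pos h2, dif_pos h3]
  rfl

theorem test : True := trivial

section entries
variable (r : ℕ) (Q : Matrix (Fin r) (Fin r) ℤ)

lemma val_div_ev (k : Fin r) : ((evIdx r k : ℕ)) / 2 = (k : ℕ) := by
  simp [evIdx]
lemma val_div_od (k : Fin r) : ((odIdx r k : ℕ)) / 2 = (k : ℕ) := by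
  simp [odIdx]; omega

lemma tEE (hodd : ∀ i, Odd (Q i i)) (heven : ∀ i j, i ≠ j → Even (Q i j)) (k l : Fin r) :
    2 * tildeMat r Q (evIdx r k) (evIdx r l) = Q k l + (if k = l then 1 else 0) := by
  have hk : ((evIdx r k : ℕ)) / 2 = (k : ℕ) := val_div_ev r k
  have hl : ((evIdx r l : ℕ)) / 2 = (l : ℕ) := val_div_ev r l
  have hk2 : ((evIdx r k : ℕ)) % 2 = 0 := by simp [evIdx]
  have hl2 : ((evIdx r l : ℕ)) % 2 = 0 := by simp [evIdx]
  simp only [tildeMat, Matrix.of_apply, hk, hl, hk2, hl2, if_true]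
  have hkk : (⟨(k : ℕ), by omega⟩ : Fin r) = k := rfl
  have hll : (⟨(l : ℕ), by omega⟩ : Fin r) = l := rfl
  by_cases h : k = l
  · subst h
    simp only [if_pos rfl, if_pos trivial]
    obtain ⟨m, hm⟩ := hodd k
    simp [hkk, hm]
    omega
  · have h' : (k : ℕ) ≠ (l : ℕ) := fun hh => h (Fin.ext hh)
    simp only [if_neg h', if_neg h]
    simp only [hkk, hll]
    obtain ⟨m, hm⟩ := heven k l h
    simp [hm]
    omega

lemma tEO (k l : Fin r) :
    tildeMat r Q (evIdx r k) (odIdx r l) = if k = l then 1 else 0 := by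
  have hk : ((evIdx r k : ℕ)) / 2 = (k : ℕ) := val_div_ev r k
  have hl : ((odIdx r l : ℕ)) / 2 = (l : ℕ) := val_div_od r l
  have hk2 : ((evIdx r k : ℕ)) % 2 = 0 := by simp [evIdx]
  have hl2 : ((odIdx r l : ℕ)) % 2 = 1 := by simp [odIdx]
  simp only [tildeMat, Matrix.of_apply, hk, hl, hk2, hl2]
  by_cases h : k = l
  · subst h; simp
  · have h' : (k : ℕ) ≠ (l : ℕ) := fun hh => h (Fin.ext hh)
    simp [h', h]

lemma tOE (k l : Fin r) :
    tildeMat r Q (odIdx r k) (evIdx r l) = if k = l then 1 else 0 := by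
  have hk : ((odIdx r k : ℕ)) / 2 = (k : ℕ) := val_div_od r k
  have hl : ((evIdx r l : ℕ)) / 2 = (l : ℕ) := val_div_ev r l
  have hk2 : ((odIdx r k : ℕ)) % 2 = 1 := by simp [odIdx]
  have hl2 : ((evIdx r l : ℕ)) % 2 = 0 := by simp [evIdx]
  simp only [tildeMat, Matrix.of_apply, hk, hl, hk2, hl2]
  by_cases h : k = l
  · subst h; simp
  · have h' : (k : ℕ) ≠ (l : ℕ) := fun hh => h (Fin.ext hh)
    simp [h', h]

lemma tOO (k l : Fin r) :
    tildeMat r Q (odIdx r k) (odIdx r l) = if k = l then 2 else 0 := by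
  have hk : ((odIdx r k : ℕ)) / 2 = (k : ℕ) := val_div_od r k
  have hl : ((odIdx r l : ℕ)) / 2 = (l : ℕ) := val_div_od r l
  have hk2 : ((odIdx r k : ℕ)) % 2 = 1 := by simp [odIdx]
  have hl2 : ((odIdx r l : ℕ)) % 2 = 1 := by simp [odIdx]
  simp only [tildeMat, Matrix.of_apply, hk, hl, hk2, hl2]
  by_cases h : k = l
  · subst h; simp
  · have h' : (k : ℕ) ≠ (l : ℕ) := fun hh => h (Fin.ext hh)
    simp [h', h]

end entries

def pack (r : ℕ) (u v : Fin r → ℤ) : Fin (2 * r) → ℤ := fun i =>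
  if (i : ℕ) % 2 = 0 then u ⟨(i : ℕ) / 2, by have := i.isLt; omega⟩
  else v ⟨(i : ℕ) / 2, by have := i.isLt; omega⟩

lemma pack_ev (r : ℕ) (u v : Fin r → ℤ) (k : Fin r) : pack r u v (evIdx r k) = u k := by
  simp [pack, evIdx]

lemma pack_od (r : ℕ) (u v : Fin r → ℤ) (k : Fin r) : pack r u v (odIdx r k) = v k := by
  have h1 : ((odIdx r k : ℕ)) % 2 = 1 := by simp [odIdx]
  have h2 : ((odIdx r k : ℕ)) / 2 = (k : ℕ) := val_div_od r k
  simp [pack, h1, h2]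

lemma key (r : ℕ) (Q : Matrix (Fin r) (Fin r) ℤ)
    (hodd : ∀ i, Odd (Q i i)) (heven : ∀ i j, i ≠ j → Even (Q i j))
    (u v : Fin r → ℤ) :
    2 * dotProduct (pack r u v) ((tildeMat r Q).mulVec (pack r u v)) =
      dotProduct u (Q.mulVec u) + ∑ k, (u k + 2 * v k) ^ 2 := by
  simp only [Matrix.mulVec, dotProduct]
  rw [sum_split r (fun i => pack r u v i * ∑ j, tildeMat r Q i j * pack r u v j)]
  rw [Finset.mul_sum, ← Finset.sum_add_distrib]
  apply Finset.sum_congr rfl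
  intro k _
  rw [sum_split r (fun j => tildeMat r Q (evIdx r k) j * pack r u v j)]
  rw [sum_split r (fun j => tildeMat r Q (odIdx r k) j * pack r u v j)]
  simp only [pack_ev, pack_od, tEO r Q, tOE r Q, tOO r Q]
  simp only [ite_mul, one_mul, zero_mul, Finset.sum_add_distrib, Finset.sum_ite_eq,
    Finset.mem_univ, if_true]
  have h1 : ∑ l, (2 * tildeMat r Q (evIdx r k) (evIdx r l)) * u l =
      (∑ l, Q k l * u l) + u k := by
    have h0 : ∀ l : Fin r, (2 * tildeMat r Q (evIdx r k) (evIdx r l)) * u l =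
        Q k l * u l + (if k = l then u l else 0) := by
      intro l; rw [tEE r Q hodd heven]; split_ifs <;> ring
    rw [Finset.sum_congr rfl (fun l _ => h0 l), Finset.sum_add_distrib, Finset.sum_ite_eq]
    simp
  have h3 : u k * (∑ l, (2 * tildeMat r Q (evIdx r k) (evIdx r l)) * u l) =
      2 * (u k * ∑ l, tildeMat r Q (evIdx r k) (evIdx r l) * u l) := by
    rw [Finset.mul_sum, Finset.mul_sum, Finset.mul_sum]
    apply Finset.sum_congr rfl; intros; ring
  linear_combination u k * h1 - h3

lemma dot_two (r : ℕ) (Q : Matrix (Fin r) (Fin r) ℤ) (u : Fin r → ℤ) :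
    dotProduct (fun k => 2 * u k) (Q.mulVec fun k => 2 * u k) =
      4 * dotProduct u (Q.mulVec u) := by
  simp only [Matrix.mulVec, dotProduct]
  rw [Finset.mul_sum]
  apply Finset.sum_congr rfl
  intro i _
  rw [Finset.mul_sum, Finset.mul_sum, Finset.mul_sum]
  apply Finset.sum_congr rfl
  intros; ring


theorem stmt5aux (r : ℕ) (Q : Matrix (Fin r) (Fin r) ℤ)
    (hsymm : Q.IsSymm)
    (hodd : ∀ i, Odd (Q i i))
    (heven : ∀ i j, i ≠ j → Even (Q i j)) :
    (∀ x : Fin r → ℤ, x ≠ 0 → 0 < dotProduct x (Q.mulVec x)) ↔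
    (∀ x : Fin (2 * r) → ℤ, x ≠ 0 → 0 < dotProduct x ((tildeMat r Q).mulVec x)) := by
  constructor
  · intro hQ x hx
    set u : Fin r → ℤ := fun k => x (evIdx r k) with hu
    set v : Fin r → ℤ := fun k => x (odIdx r k) with hv
    have hpx : pack r u v = x := by
      funext i
      by_cases h : (i : ℕ) % 2 = 0
      · have he : evIdx r ⟨(i : ℕ) / 2, by have := i.isLt; omega⟩ = i := by
          apply Fin.ext; simp [evIdx]; omega
        simp only [pack, if_pos h, hu]
        rw [he]
      · have ho : odIdx r ⟨(i : ℕ) / 2, by have := i.isLt; omega⟩ = i := by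
          apply Fin.ext; simp [odIdx]; omega
        simp only [pack, if_neg h, hv]
        rw [ho]
    have hk := key r Q hodd heven u v
    rw [hpx] at hk
    have hsq : (0:ℤ) ≤ ∑ k, (u k + 2 * v k) ^ 2 :=
      Finset.sum_nonneg fun k _ => sq_nonneg _
    by_cases hu0 : u = 0
    · have hv0 : ∃ k, v k ≠ 0 := by
        by_contra hc
        push_neg at hc
        apply hx
        funext i
        rw [← hpx]
        by_cases h : (i : ℕ) % 2 = 0
        · simp [pack, if_pos h, hu0]
        · simp [pack, if_neg h, hc]
      obtain ⟨k, hvk⟩ := hv0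
      have h1 : dotProduct u (Q.mulVec u) = 0 := by simp [hu0]
      have h2 : (0:ℤ) < (u k + 2 * v k) ^ 2 := by
        have : u k = 0 := by rw [hu0]; rfl
        rw [this]
        have hne : (0:ℤ) + 2 * v k ≠ 0 := by omega
        have := sq_abs ((0:ℤ) + 2 * v k)
        have hab : (0:ℤ) < |(0:ℤ) + 2 * v k| := abs_pos.mpr hne
        nlinarith
      have h3 : (u k + 2 * v k) ^ 2 ≤ ∑ l, (u l + 2 * v l) ^ 2 :=
        Finset.single_le_sum (f := fun l => (u l + 2 * v l) ^ 2) (fun l _ => sq_nonneg _) (Finset.mem_univ k)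
      linarith
    · have h1 := hQ u hu0
      linarith
  · intro hT u hu
    set x := pack r (fun k => 2 * u k) (fun k => -u k) with hxdef
    have hx : x ≠ 0 := by
      obtain ⟨k, hk⟩ : ∃ k, u k ≠ 0 := by
        by_contra hc; push_neg at hc; exact hu (funext hc)
      intro h0
      have : x (evIdx r k) = 0 := by rw [h0]; rfl
      rw [hxdef, pack_ev] at this
      omega
    have hk := key r Q hodd heven (fun k => 2 * u k) (fun k => -u k)
    have hz : ∑ k, ((2 * u k) + 2 * (-u k)) ^ 2 = 0 := by
      apply Finset.sum_eq_zero; intro k _; ring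
    rw [hz, dot_two] at hk
    have hp := hT x hx
    rw [← hxdef] at hk
    linarith

/-- `Q` is positive definite iff `Q̃` is positive definite. -/
theorem stmt5 (r : ℕ) (Q : Matrix (Fin r) (Fin r) ℤ)
    (hsymm : Q.IsSymm)
    (hodd : ∀ i, Odd (Q i i))
    (heven : ∀ i j, i ≠ j → Even (Q i j)) :
    (∀ x : Fin r → ℤ, x ≠ 0 → 0 < dotProduct x (Q.mulVec x)) ↔
    (∀ x : Fin (2 * r) → ℤ, x ≠ 0 → 0 < dotProduct x ((tildeMat r Q).mulVec x)) := by
  exact stmt5aux r Q hsymm hodd heven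
end

section
/- Let Q be a symmetric integer r×r matrix whose off-diagonal entries are all even. Then det Q is congruent modulo 4 to the product of the diagonal entries of Q. -/
/-- For a symmetric integer matrix whose off-diagonal entries are all even,
the determinant is congruent modulo 4 to the product of the diagonal entries. -/
theorem stmt6 (r : ℕ) (Q : Matrix (Fin r) (Fin r) ℤ)
    (hsymm : Q.IsSymm)
    (heven : ∀ i j, i ≠ j → Even (Q i j)) :
    Q.det ≡ (∏ i, Q i i) [ZMOD 4] := by
  have hdet := Matrix.det_apply Q
  have hdvd : (4 : ℤ) ∣ Q.det - ∏ i, Q i i := by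
    rw [hdet]
    have h1 : (1 : Equiv.Perm (Fin r)) ∈ (Finset.univ : Finset (Equiv.Perm (Fin r))) :=
      Finset.mem_univ _
    rw [← Finset.add_sum_erase _ _ h1]
    have hid : (Equiv.Perm.sign (1 : Equiv.Perm (Fin r))) • ∏ i, Q ((1 : Equiv.Perm (Fin r)) i) i
        = ∏ i, Q i i := by simp
    rw [hid, add_sub_cancel_left]
    apply Finset.dvd_sum
    intro σ hσ
    have hσ1 : σ ≠ 1 := (Finset.mem_erase.mp hσ).1
    obtain ⟨i, hi⟩ : ∃ i, σ i ≠ i := by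
      by_contra h
      push_neg at h
      exact hσ1 (Equiv.ext fun x => h x)
    set j := σ i with hj
    have hij : i ≠ j := fun h => hi h.symm
    have hjj : σ j ≠ j := by
      intro h
      exact hi (σ.injective (h.trans hj))
    have h2i : (2 : ℤ) ∣ Q (σ i) i := (heven _ _ hi).two_dvd
    have h2j : (2 : ℤ) ∣ Q (σ j) j := (heven _ _ hjj).two_dvd
    have hprod : (4 : ℤ) ∣ ∏ k, Q (σ k) k := by
      have hsub : ({i, j} : Finset (Fin r)) ⊆ Finset.univ := Finset.subset_univ _
      have hpair : ∏ k ∈ ({i, j} : Finset (Fin r)), Q (σ k) k = Q (σ i) i * Q (σ j) j :=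
        Finset.prod_pair hij
      have hdvd2 : (∏ k ∈ ({i, j} : Finset (Fin r)), Q (σ k) k) ∣ ∏ k, Q (σ k) k :=
        Finset.prod_dvd_prod_of_subset _ _ _ hsub
      calc (4 : ℤ) = 2 * 2 := by norm_num
        _ ∣ Q (σ i) i * Q (σ j) j := mul_dvd_mul h2i h2j
        _ = ∏ k ∈ ({i, j} : Finset (Fin r)), Q (σ k) k := hpair.symm
        _ ∣ ∏ k, Q (σ k) k := hdvd2
    rw [Units.smul_def]
    exact hprod.mul_left _
  exact (Int.modEq_iff_dvd.mpr hdvd).symm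
end

section
/- Let Q be a symmetric positive-definite integer r×r matrix and let ξ ∈ ℤ^r be a characteristic covector for Q (i.e., ξ_i ≡ Q_{ii} mod 2 for all i). If ξ_i > Q_{ii} for some i, then the vector ξ' obtained by subtracting twice the i-th column of Q from ξ is a characteristic covector with (ξ')ᵀQ⁻¹ξ' < ξᵀQ⁻¹ξ and ξ' ≡ ξ in ℤ^r/Q(ℤ^r). -/
/-- For a positive-definite symmetric integer matrix `Q` and a
characteristic covector `ξ` with `ξ i > Q i i` for some `i`, subtracting twice the
`i`-th column of `Q` from `ξ` yields a characteristic covector `ξ'` with smaller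
`ξᵀQ⁻¹ξ` and the same class in `ℤ^r/Q(ℤ^r)`. -/
theorem stmt7 (r : ℕ) (Q : Matrix (Fin r) (Fin r) ℤ)
    (hsymm : Q.IsSymm)
    (hpos : ∀ x : Fin r → ℤ, x ≠ 0 → 0 < dotProduct x (Q.mulVec x))
    (ξ : Fin r → ℤ) (hchar : ∀ k, ξ k ≡ Q k k [ZMOD 2])
    (i : Fin r) (hi : Q i i < ξ i) :
    let ξ' : Fin r → ℤ := fun j => ξ j - 2 * Q j i
    (∀ k, ξ' k ≡ Q k k [ZMOD 2]) ∧
    dotProduct (fun k => (ξ' k : ℚ))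
        ((Q.map (Int.cast : ℤ → ℚ))⁻¹.mulVec fun k => (ξ' k : ℚ)) <
      dotProduct (fun k => (ξ k : ℚ))
        ((Q.map (Int.cast : ℤ → ℚ))⁻¹.mulVec fun k => (ξ k : ℚ)) ∧
    ∃ v : Fin r → ℤ, (fun k => ξ' k - ξ k) = Q.mulVec v := by
  intro ξ'
  -- determinant is nonzero
  have hdet : Q.det ≠ 0 := by
    intro h
    obtain ⟨v, hv, hv0⟩ := Matrix.exists_mulVec_eq_zero_iff.mpr h
    have := hpos v hv
    rw [hv0, dotProduct_zero] at this
    exact lt_irrefl 0 this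
  set QQ : Matrix (Fin r) (Fin r) ℚ := Q.map (Int.cast : ℤ → ℚ) with hQQ
  have hdetQQ : QQ.det ≠ 0 := by
    have : QQ.det = ((Q.det : ℤ) : ℚ) := by
      rw [hQQ]
      exact (RingHom.map_det (Int.castRingHom ℚ) Q).symm
    rw [this]
    exact_mod_cast hdet
  have hsymmQQ : QQ.transpose = QQ := by
    rw [hQQ, ← Matrix.transpose_map]
    unfold Matrix.IsSymm at hsymm
    rw [hsymm]
  have hinv1 : QQ⁻¹ * QQ = 1 := Matrix.nonsing_inv_mul QQ (isUnit_iff_ne_zero.mpr hdetQQ)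
  have hinv2 : QQ * QQ⁻¹ = 1 := Matrix.mul_nonsing_inv QQ (isUnit_iff_ne_zero.mpr hdetQQ)
  set A := QQ⁻¹ with hA
  set x : Fin r → ℚ := fun k => (ξ k : ℚ) with hx
  set u : Fin r → ℚ := Pi.single i 2 with hu
  have hm : (fun k => (ξ' k : ℚ)) = x - QQ.mulVec u := by
    funext j
    simp only [ξ', hx, Pi.sub_apply, Matrix.mulVec, dotProduct, hu]
    rw [Finset.sum_eq_single i]
    · push_cast
      simp [hQQ, Matrix.map_apply, mul_comm]
    · intro b _ hb; simp [Pi.single_eq_of_ne hb]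
    · intro h; exact absurd (Finset.mem_univ i) h
  refine ⟨?_, ?_, ?_⟩
  · intro k
    have h2 : ξ' k ≡ ξ k [ZMOD 2] :=
      Int.ModEq.symm ((Int.modEq_iff_dvd).mpr ⟨-(Q k i), by simp [ξ']⟩)
    exact h2.trans (hchar k)
  · rw [hm]
    have key1 : A.mulVec (QQ.mulVec u) = u := by
      rw [Matrix.mulVec_mulVec, hinv1, Matrix.one_mulVec]
    have key2 : ∀ w : Fin r → ℚ, dotProduct (QQ.mulVec u) (A.mulVec w)
        = dotProduct u w := by
      intro w
      rw [dotProduct_comm, Matrix.dotProduct_mulVec, ← Matrix.mulVec_transpose,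
        hsymmQQ, Matrix.mulVec_mulVec, hinv2, Matrix.one_mulVec, dotProduct_comm]
    have hxu : dotProduct x u = 2 * (ξ i : ℚ) := by
      simp only [dotProduct, hu]
      rw [Finset.sum_eq_single i]
      · simp [hx, mul_comm]
      · intro b _ hb; simp [Pi.single_eq_of_ne hb]
      · intro h; exact absurd (Finset.mem_univ i) h
    have hux : dotProduct u x = 2 * (ξ i : ℚ) := by
      rw [dotProduct_comm]; exact hxu
    have huQu : dotProduct (QQ.mulVec u) u = 4 * (Q i i : ℚ) := by
      simp only [dotProduct, hu]
      rw [Finset.sum_eq_single i]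
      · simp only [Pi.single_eq_same, Matrix.mulVec, dotProduct]
        rw [Finset.sum_eq_single i]
        · simp [hQQ, Matrix.map_apply]; ring
        · intro b _ hb; simp [Pi.single_eq_of_ne hb]
        · intro h; exact absurd (Finset.mem_univ i) h
      · intro b _ hb; simp [Pi.single_eq_of_ne hb]
      · intro h; exact absurd (Finset.mem_univ i) h
    rw [Matrix.mulVec_sub, sub_dotProduct, dotProduct_sub,
      dotProduct_sub, key1, key2, hxu, hux, huQu]
    have : (Q i i : ℚ) < (ξ i : ℚ) := by exact_mod_cast hi
    linarith
  · refine ⟨fun k => if k = i then -2 else 0, ?_⟩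
    funext j
    simp only [ξ', Matrix.mulVec, dotProduct]
    rw [Finset.sum_eq_single i]
    · simp [hsymm.apply]; ring
    · intro b _ hb; simp [hb]
    · intro h; exact absurd (Finset.mem_univ i) h
end

section
/- Let Q be a symmetric positive-definite integer r×r matrix presenting the finite abelian group Γ_Q = ℤ^r/Q(ℤ^r). Then every coset in Γ_Q of a characteristic covector contains a characteristic covector ξ with −Q_{ii} ≤ ξ_i ≤ Q_{ii} for all i. -/
open Matrix


/-- For a positive-definite symmetric integer matrix `Q`, every coset (in
`ℤ^r/Q(ℤ^r)`) of a characteristic covector contains a characteristic covector `ξ` with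
`−Q_{ii} ≤ ξ_i ≤ Q_{ii}` for all `i`. -/
theorem stmt9 (r : ℕ) (Q : Matrix (Fin r) (Fin r) ℤ)
    (hsymm : Q.IsSymm)
    (hpos : ∀ x : Fin r → ℤ, x ≠ 0 → 0 < dotProduct x (Q.mulVec x))
    (ξ : Fin r → ℤ) (hchar : ∀ k, ξ k ≡ Q k k [ZMOD 2]) :
    ∃ ξ' : Fin r → ℤ,
      (∀ k, ξ' k ≡ Q k k [ZMOD 2]) ∧
      (∃ v : Fin r → ℤ, ξ' - ξ = Q.mulVec v) ∧
      ∀ i, -(Q i i) ≤ ξ' i ∧ ξ' i ≤ Q i i := by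
  classical
  set A := Q.adjugate with hAdef
  -- adjugate is symmetric
  have hA : Aᵀ = A := by
    rw [hAdef, Matrix.adjugate_transpose, hsymm.eq]
  -- nonneg dot products
  have hpos' : ∀ x : Fin r → ℤ, 0 ≤ x ⬝ᵥ Q.mulVec x := by
    intro x
    by_cases hx : x = 0
    · simp [hx]
    · exact (hpos x hx).le
  -- the determinant is nonzero
  have hdet : Q.det ≠ 0 := by
    intro h
    obtain ⟨v, hv0, hv⟩ := Matrix.exists_mulVec_eq_zero_iff.mpr h
    have := hpos v hv0
    rw [hv] at this
    simp at this
  have hdet2 : 0 < Q.det * Q.det := mul_self_pos.mpr hdet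
  -- key algebra: A ∘ Q = det • id
  have hAQ : ∀ u : Fin r → ℤ, A.mulVec (Q.mulVec u) = Q.det • u := by
    intro u
    rw [Matrix.mulVec_mulVec, hAdef, Matrix.adjugate_mul, Matrix.smul_mulVec,
      Matrix.one_mulVec]
  -- symmetry of the bilinear form of A
  have hAsymm : ∀ x y : Fin r → ℤ, x ⬝ᵥ A.mulVec y = y ⬝ᵥ A.mulVec x := by
    intro x y
    rw [Matrix.dotProduct_mulVec, ← hA, Matrix.vecMul_transpose, dotProduct_comm, hA]
  -- nonnegativity of the measure
  have hm0 : ∀ η : Fin r → ℤ, 0 ≤ Q.det * (η ⬝ᵥ A.mulVec η) := by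
    intro η
    have hQA : Q.mulVec (A.mulVec η) = Q.det • η := by
      rw [Matrix.mulVec_mulVec, hAdef, Matrix.mul_adjugate, Matrix.smul_mulVec,
        Matrix.one_mulVec]
    have h1 : (A.mulVec η) ⬝ᵥ Q.mulVec (A.mulVec η) = Q.det * (η ⬝ᵥ A.mulVec η) := by
      rw [hQA, dotProduct_smul, dotProduct_comm]
      rfl
    rw [← h1]; exact hpos' _
  suffices H : ∀ n : ℕ, ∀ η : Fin r → ℤ, (Q.det * (η ⬝ᵥ A.mulVec η)).toNat ≤ n →
      (∀ k, η k ≡ Q k k [ZMOD 2]) →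
      ∃ ξ' : Fin r → ℤ, (∀ k, ξ' k ≡ Q k k [ZMOD 2]) ∧ (∃ v, ξ' - η = Q.mulVec v) ∧
        ∀ i, -(Q i i) ≤ ξ' i ∧ ξ' i ≤ Q i i by
    exact H _ ξ le_rfl hchar
  intro n
  induction n using Nat.strong_induction_on with
  | _ n IH =>
  intro η hmeas hcharη
  by_cases hb : ∀ i, -(Q i i) ≤ η i ∧ η i ≤ Q i i
  · exact ⟨η, hcharη, ⟨0, by simp⟩, hb⟩
  push_neg at hb
  obtain ⟨i, hi⟩ := hb
  obtain ⟨s, hs2, hsη⟩ : ∃ s : ℤ, s * s = 1 ∧ Q i i < s * η i := by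
    rcases lt_or_ge (η i) (-(Q i i)) with h | h
    · refine ⟨-1, by ring, by omega⟩
    · have := hi h
      exact ⟨1, by ring, by omega⟩
  set e : Fin r → ℤ := Pi.single i 1 with he
  set c : Fin r → ℤ := (2 * s) • Q.mulVec e with hc
  set η₂ : Fin r → ℤ := η - c with hη₂
  have hQe_i : (Q.mulVec e) i = Q i i := by simp [he, Matrix.mulVec_single]
  have hchar₂ : ∀ k, η₂ k ≡ Q k k [ZMOD 2] := by
    intro k
    have hd : η₂ k - η k = 2 * (-(s * (Q.mulVec e) k)) := by
      have hek : η₂ k = η k - (2 * s) * (Q.mulVec e) k := rfl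
      rw [hek]; ring
    have h2 : η₂ k ≡ η k [ZMOD 2] :=
      Int.ModEq.symm (Int.modEq_iff_dvd.mpr ⟨-(s * (Q.mulVec e) k), hd⟩)
    exact h2.trans (hcharη k)
  have hAc : A.mulVec c = (2 * s) • (Q.det • e) := by
    rw [hc, Matrix.mulVec_smul, hAQ]
  have h1 : η ⬝ᵥ A.mulVec c = (2 * s) * (Q.det * η i) := by
    rw [hAc, dotProduct_smul, dotProduct_smul, he, dotProduct_single,
      smul_eq_mul, smul_eq_mul]
    ring
  have h2 : c ⬝ᵥ A.mulVec c = (2 * s) * ((2 * s) * (Q.det * Q i i)) := by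
    have hci : c i = 2 * s * Q i i := by
      rw [show c i = (2 * s) * (Q.mulVec e) i from rfl, hQe_i]
    rw [hAc, dotProduct_smul, dotProduct_smul, he, dotProduct_single,
      hci, smul_eq_mul, smul_eq_mul]
    ring
  have h3 : c ⬝ᵥ A.mulVec η = (2 * s) * (Q.det * η i) := by
    rw [hAsymm, h1]
  have hkey : Q.det * (η₂ ⬝ᵥ A.mulVec η₂)
      = Q.det * (η ⬝ᵥ A.mulVec η) - 4 * (Q.det * Q.det) * (s * η i - Q i i) := by
    rw [hη₂, Matrix.mulVec_sub, sub_dotProduct, dotProduct_sub,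
      dotProduct_sub, h1, h2, h3]
    linear_combination (4 * Q.det * Q.det * Q i i) * hs2
  have hlt : Q.det * (η₂ ⬝ᵥ A.mulVec η₂) < Q.det * (η ⬝ᵥ A.mulVec η) := by
    nlinarith [hkey, hdet2, hsη]
  have hnat : (Q.det * (η₂ ⬝ᵥ A.mulVec η₂)).toNat < n := by
    have h0 := hm0 η₂
    have h4 := (Int.toNat_lt_toNat (lt_of_le_of_lt h0 hlt)).mpr hlt
    omega
  obtain ⟨ξ', hc1, ⟨v, hv⟩, hc3⟩ := IH _ hnat η₂ le_rfl hchar₂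
  refine ⟨ξ', hc1, ⟨v - (2 * s) • e, ?_⟩, hc3⟩
  rw [Matrix.mulVec_sub, Matrix.mulVec_smul, ← hv, ← hc, hη₂]
  abel
end
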